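/- arXiv:2409.19355 — 3 statements merged into one kernel-verified Lean document; each statement's English description precedes it below -/
import Mathlib

section
/- Fix e ≥ 2, l ≥ 1, m ∈ ℤ. Let λ and μ be partitions with τ^l(λ) = (λ^l, s^l) and τ^l(μ) = (μ^l, s^l) having the same l-multicharge s^l, and with the same e-core multicharge s_e (i.e. τ_e(λ) = (λ_e, s_e), τ_e(μ) = (μ_e, s_e)). If |μ^l| = |λ^l|, then |μ_e| = |λ_e|. -/
/-- A partition, encoded as a weakly decreasing, eventually zero function
`f : ℕ → ℕ` where `f i` is the `(i+1)`-st part. -/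
def IsPartition (f : ℕ → ℕ) : Prop :=
  Antitone f ∧ ∃ N, ∀ n ≥ N, f n = 0

/-- The size (number of boxes) of a partition. -/
noncomputable def psize (f : ℕ → ℕ) : ℕ := ∑ᶠ i, f i

/-- The β-set of charge `m` of a partition `f`, as a subset of `ℤ`:
its elements are `λ_i − i + m` for `i ≥ 1`. -/
def betaSet (m : ℤ) (f : ℕ → ℕ) : Set ℤ :=
  { b | ∃ i : ℕ, b = (f i : ℤ) - (i + 1) + m }

/-- Shift of a set of β-numbers by `r`. -/
def shiftSet (X : Set ℤ) (r : ℤ) : Set ℤ := { y | y - r ∈ X }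

/-- `X` is a β-set (symbol) of charge `m`: it contains all sufficiently small
integers, is bounded above, and whenever all integers `< N` lie in `X`, the
number of elements of `X` that are `≥ N` equals `m − N`. -/
def IsBetaSet (m : ℤ) (X : Set ℤ) : Prop :=
  (∃ N : ℤ, ∀ x < N, x ∈ X) ∧ (∃ N : ℤ, ∀ x ∈ X, x ≤ N) ∧
    ∀ N : ℤ, (∀ x < N, x ∈ X) → ({x ∈ X | N ≤ x}.ncard : ℤ) = m - N

/-- Runner `j` of the `e`-abacus of a β-set `X`: `{ k | j + k·e ∈ X }`. -/
def runnerSet (e : ℕ) (j : ℕ) (X : Set ℤ) : Set ℤ := { k : ℤ | (j : ℤ) + k * e ∈ X }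

/-- `(g, s)` is the `e`-quotient data of `(f, m)`: for each `j`, the β-set of
`g j` with charge `s j` is runner `j` of the `e`-abacus of `X^m(f)`. -/
def QuotientData (e : ℕ) (m : ℤ) (f : ℕ → ℕ) (g : Fin e → ℕ → ℕ) (s : Fin e → ℤ) : Prop :=
  ∀ j : Fin e, betaSet (s j) (g j) = runnerSet e j (betaSet m f)

/-- The Young diagram of a partition, with 0-based coordinates. -/
def youngDiagram (f : ℕ → ℕ) : Set (ℕ × ℕ) := { p | p.2 < f p.1 }

/-- Component `d` of Uglov's level-`l` decomposition of a β-set `X`: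
write `β = c + e·d + e·l·m'` with `c ∈ {1,…,e}`, `d ∈ {0,…,l−1}`, and collect
`c + e·m'` over the β with middle digit `d`. -/
def uglovComp (e l : ℕ) (d : ℕ) (X : Set ℤ) : Set ℤ :=
  { y | ∃ β ∈ X, ((β - 1).ediv (e : ℤ)).emod (l : ℤ) = (d : ℤ) ∧
      y = (β - 1).emod (e : ℤ) + 1 + (e : ℤ) * ((β - 1).ediv ((e : ℤ) * (l : ℤ))) }

/-- `(L, s)` is the Uglov level-`l` data `τ^l(f)` of the partition `f` with
charge `m`. -/
def UglovData (e l : ℕ) (m : ℤ) (f : ℕ → ℕ) (L : Fin l → ℕ → ℕ) (s : Fin l → ℤ) : Prop :=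
  ∀ d : Fin l, betaSet (s d) (L d) = uglovComp e l d (betaSet m f)

/-- The `l`-partition `L` with multicharge `s` has an addable node of residue
`i` mod `e`: some component `c` has `β ∈ X_c`, `β+1 ∉ X_c`, `β+1 ≡ i (mod e)`. -/
def HasAddableNode (e l : ℕ) (L : Fin l → ℕ → ℕ) (s : Fin l → ℤ) (i : ℤ) : Prop :=
  ∃ (c : Fin l) (β : ℤ), β ∈ betaSet (s c) (L c) ∧ β + 1 ∉ betaSet (s c) (L c) ∧
    (β + 1).emod (e : ℤ) = i

/-- The `l`-partition `L` with multicharge `s` has a removable node of residue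
`i` mod `e`: some component `c` has `β ∈ X_c`, `β−1 ∉ X_c`, `β ≡ i (mod e)`. -/
def HasRemovableNode (e l : ℕ) (L : Fin l → ℕ → ℕ) (s : Fin l → ℤ) (i : ℤ) : Prop :=
  ∃ (c : Fin l) (β : ℤ), β ∈ betaSet (s c) (L c) ∧ β - 1 ∉ betaSet (s c) (L c) ∧
    β.emod (e : ℤ) = i

/-- The last index of `Fin e`. -/
def finLast' (e : ℕ) [NeZero e] : Fin e :=
  ⟨e - 1, Nat.sub_lt (Nat.pos_of_ne_zero (NeZero.ne e)) Nat.one_pos⟩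

/-- `(L, s)` is an `e`-core pair: its `l`-symbol satisfies
`X₀ ⊆ X₁ ⊆ ⋯ ⊆ X_{l-1} ⊆ X₀ + e`. -/
def IsECorePair (e l : ℕ) [NeZero l] (L : Fin l → ℕ → ℕ) (s : Fin l → ℤ) : Prop :=
  (∀ c c' : Fin l, c ≤ c' → betaSet (s c) (L c) ⊆ betaSet (s c') (L c')) ∧
    betaSet (s (finLast' l)) (L (finLast' l)) ⊆ shiftSet (betaSet (s 0) (L 0)) (e : ℤ)

/-- The generator `σ_i` of the (extended) affine symmetric group acting on
`ℤ^e`: `σ_i` (for `i ≠ 0`) swaps coordinates `i−1` and `i`, and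
`σ₀·s = (s_{e-1}+l, s₁, …, s_{e-2}, s₀−l)`. -/
def sigmaAct (e : ℕ) [NeZero e] (l : ℕ) (i : Fin e) (s : Fin e → ℤ) : Fin e → ℤ :=
  if i = 0 then
    fun j => if j = 0 then s (finLast' e) + l else if j = finLast' e then s 0 - l else s j
  else fun j => s (Equiv.swap (i - 1) i j)

/-- The shift `τ` of the extended affine symmetric group:
`τ·s = (s_{e-1}+l, s₀, …, s_{e-2})`. -/
def tauAct (e : ℕ) [NeZero e] (l : ℕ) (s : Fin e → ℤ) : Fin e → ℤ :=
  fun j => if j = 0 then s (finLast' e) + l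
    else s ⟨j.val - 1, lt_of_le_of_lt (Nat.sub_le _ _) j.isLt⟩

/-- The inverse shift `τ⁻¹`: `τ⁻¹·s = (s₁, …, s_{e-1}, s₀−l)`. -/
def tauInvAct (e : ℕ) [NeZero e] (l : ℕ) (s : Fin e → ℤ) : Fin e → ℤ :=
  fun j => if h : j.val + 1 < e then s ⟨j.val + 1, h⟩ else s 0 - l

/-- `φ` is one of the generators of the extended affine symmetric group. -/
def GenOf (e : ℕ) [NeZero e] (l : ℕ) (φ : (Fin e → ℤ) → Fin e → ℤ) : Prop :=
  (∃ i, φ = sigmaAct e l i) ∨ φ = tauAct e l ∨ φ = tauInvAct e l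

/-- `s` and `s'` lie in the same orbit under the extended affine symmetric
group. -/
def SameOrbit (e : ℕ) [NeZero e] (l : ℕ) (s s' : Fin e → ℤ) : Prop :=
  ∃ L : List ((Fin e → ℤ) → Fin e → ℤ), (∀ φ ∈ L, GenOf e l φ) ∧
    L.foldr (fun φ t => φ t) s = s'

/-- The `l`-partition `L` (with multicharge `sl`) lies in the block
`B(se, w)`: the corresponding partition (via Uglov's bijection) has `e`-core
multicharge `se` and weight `w`. -/
def InBlock (e l : ℕ) (m : ℤ) (sl : Fin l → ℤ) (se : Fin e → ℤ) (w : ℕ)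
    (L : Fin l → ℕ → ℕ) : Prop :=
  (∀ c, IsPartition (L c)) ∧
    ∃ (f : ℕ → ℕ) (g : Fin e → ℕ → ℕ), IsPartition f ∧ (∀ j, IsPartition (g j)) ∧
      UglovData e l m f L sl ∧ QuotientData e m f g se ∧ ∑ j, psize (g j) = w

/-- `sl` is the `l`-multicharge associated to the `e`-core multicharge `se`
via level-rank duality: the partition with empty `e`-quotient and `e`-core
multicharge `se` has Uglov `l`-multicharge `sl`. -/
def AssocCharge (e l : ℕ) (m : ℤ) (se : Fin e → ℤ) (sl : Fin l → ℤ) : Prop :=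
  ∃ f : ℕ → ℕ, IsPartition f ∧ QuotientData e m f (fun _ _ => 0) se ∧
    ∃ Λ : Fin l → ℕ → ℕ, (∀ c, IsPartition (Λ c)) ∧ UglovData e l m f Λ sl

/-- The number of nodes of residue `0` (mod `e`) of the `l`-partition `Λ`
with multicharge `s`; the node in row `a`, column `b`, component `c` has
residue `(b − a + s_c) mod e`. -/
noncomputable def residueNodeCount (e l : ℕ) (Λ : Fin l → ℕ → ℕ) (s : Fin l → ℤ) : ℕ :=
  Set.ncard { p : ℕ × ℕ × Fin l |
    p.2.1 < Λ p.2.2 p.1 ∧ (((p.2.1 : ℤ) + 1) - ((p.1 : ℤ) + 1) + s p.2.2).emod (e : ℤ) = 0 }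

/-- An elementary move on β-sets: replace `β ∈ X` by `β − e ∉ X`
(removing an `e`-rim-hook). -/
def ElemMove (e : ℕ) (X Y : Set ℤ) : Prop :=
  ∃ β, β ∈ X ∧ β - (e : ℤ) ∉ X ∧ Y = insert (β - (e : ℤ)) (X \ {β})

/-!
Cut the β-sets of `λ` and `μ` at a common integer `t` below which both contain everything. The
finite parts `F`, `F'` above `t` have sums exceeding `|λ|` and `|μ|` by the same amount, and the
same holds for every β-set obtained by restricting them to a slice of `ℤ` on which the cut is
again a cut. The runners `β = j + k·e` of the `e`-abacus are such slices, which gives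
`∑ F - ∑ F' = e (|λ_e| - |μ_e|)`. So are Uglov's components `β = c + e·d + e·l·q ↦ c + e·q`
(`c ∈ {1, …, e}`, `0 ≤ d < l`) when `t = 1 + e·l·P`. Writing `β = l (c + e·q) + (1 - l) c + e·d`,
the sums of `c` and of `d` agree on `F` and `F'` because equal multicharges put equally many
β-numbers on each runner and in each component, so `∑ F - ∑ F' = l (|λ^l| - |μ^l|)` as well.
-/

open Finset

def IsTruncation (F : Finset ℤ) (X : Set ℤ) (t : ℤ) : Prop :=
  Set.Iio t ⊆ X ∧ ↑F = X ∩ Set.Ici t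

namespace IsTruncation

variable {F F' : Finset ℤ} {X : Set ℤ} {t : ℤ}

theorem unique (h : IsTruncation F X t) (h' : IsTruncation F' X t) : F = F' :=
  coe_injective (h.2.trans h'.2.symm)

theorem union_Ico (h : IsTruncation F X t) {t₀ : ℤ} (ht : t₀ ≤ t) :
    IsTruncation (F ∪ Ico t₀ t) X t₀ := by
  refine ⟨fun x hx => h.1 (lt_of_lt_of_le hx ht), ?_⟩
  ext x
  have := @h.1 x
  simp only [coe_union, h.2, coe_Ico, Set.mem_union, Set.mem_inter_iff, Set.mem_Ici, Set.mem_Ico,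
    Set.mem_Iio] at this ⊢
  constructor
  · rintro (⟨hX, hx⟩ | ⟨hx, hxt⟩)
    · exact ⟨hX, ht.trans hx⟩
    · exact ⟨this hxt, hx⟩
  · rintro ⟨hX, hx⟩
    exact (le_or_gt t x).imp (fun h => ⟨hX, h⟩) (fun h => ⟨hx, h⟩)

theorem disjoint_Ico (h : IsTruncation F X t) (t₀ : ℤ) : Disjoint F (Ico t₀ t) := by
  rw [← disjoint_coe, h.2, coe_Ico]
  exact Set.disjoint_left.2 fun x hx hx' => not_le.2 hx'.2 hx.2

theorem preimage (h : IsTruncation F X t) {ψ : ℤ → ℤ} (hψ : Set.InjOn ψ (ψ ⁻¹' ↑F)) {t' : ℤ}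
    (hcut : ∀ y, ψ y < t ↔ y < t') : IsTruncation (F.preimage ψ hψ) (ψ ⁻¹' X) t' := by
  refine ⟨fun y hy => h.1 ((hcut y).2 hy), ?_⟩
  rw [coe_preimage, h.2]
  refine Set.ext fun y => ?_
  simp only [Set.mem_preimage, Set.mem_inter_iff, Set.mem_Ici, ← not_lt, hcut]

end IsTruncation

section BetaSet

def betaSeq (s : ℤ) (f : ℕ → ℕ) (i : ℕ) : ℤ := (f i : ℤ) - (i + 1) + s

theorem betaSet_eq_range (s : ℤ) (f : ℕ → ℕ) : betaSet s f = Set.range (betaSeq s f) := by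
  ext x
  simp [betaSet, betaSeq, eq_comm]

theorem betaSeq_strictAnti {f : ℕ → ℕ} (hf : Antitone f) (s : ℤ) : StrictAnti (betaSeq s f) :=
  strictAnti_nat_of_succ_lt fun n => by
    have := hf (Nat.le_add_right n 1)
    simp only [betaSeq]
    omega

variable {f : ℕ → ℕ} {N : ℕ} {s t : ℤ}

theorem isTruncation_image_betaSeq (hN : ∀ n ≥ N, f n = 0) (ht : t ≤ s - N) :
    IsTruncation ((range (s - t).toNat).image (betaSeq s f)) (betaSet s f) t := by
  have hK : ((s - t).toNat : ℤ) = s - t := Int.toNat_of_nonneg (by omega)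
  have hge : ∀ i, t ≤ betaSeq s f i ↔ i < (s - t).toNat := fun i => by
    simp only [betaSeq]
    constructor
    · intro hi
      by_contra! hKi
      have := hN i (by omega)
      omega
    · omega
  rw [betaSet_eq_range]
  refine ⟨fun x hx => ⟨(s - 1 - x).toNat, ?_⟩, ?_⟩
  · have hx : x < t := hx
    have := hN (s - 1 - x).toNat (by omega)
    simp only [betaSeq, this]
    omega
  · ext x
    simp only [coe_image, coe_range, Set.mem_image, Set.mem_Iio, Set.mem_inter_iff,
      Set.mem_range, Set.mem_Ici]
    constructor
    · rintro ⟨i, hi, rfl⟩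
      exact ⟨⟨i, rfl⟩, (hge i).2 hi⟩
    · rintro ⟨⟨i, rfl⟩, hi⟩
      exact ⟨i, (hge i).1 hi, rfl⟩

theorem sum_range_betaSeq (hN : ∀ n ≥ N, f n = 0) {K : ℕ} (hK : N ≤ K) :
    ∑ i ∈ range K, betaSeq s f i = psize f + ∑ x ∈ Ico (s - K) s, x := by
  have hpsize : psize f = ∑ i ∈ range K, f i :=
    finsum_eq_sum_of_support_subset f fun i hi => by
      simp only [coe_range, Set.mem_Iio]
      by_contra! hKi
      exact hi (hN i (hK.trans hKi))
  rw [hpsize]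
  push_cast
  clear hK hpsize
  induction K with
  | zero => simp
  | succ K ih =>
    have hIco : Ico (s - (K + 1 : ℕ)) s = insert (s - (K + 1 : ℕ)) (Ico (s - K) s) := by
      ext x
      simp only [mem_Ico, mem_insert]
      omega
    rw [sum_range_succ, sum_range_succ, ih, hIco, sum_insert (by simp only [mem_Ico]; omega)]
    simp only [betaSeq]
    push_cast
    ring

theorem IsTruncation.card_eq_and_sum_eq {F : Finset ℤ} (hf : IsPartition f)
    (h : IsTruncation F (betaSet s f) t) :
    (#F : ℤ) = s - t ∧ ∑ x ∈ F, x = psize f + ∑ x ∈ Ico t s, x := by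
  obtain ⟨hanti, N, hN⟩ := hf
  set t₀ := min t (s - N)
  set K := (s - t₀).toNat
  have hK : (K : ℤ) = s - t₀ := Int.toNat_of_nonneg (by omega)
  have hext : F ∪ Ico t₀ t = (range K).image (betaSeq s f) :=
    (h.union_Ico (min_le_left _ _)).unique (isTruncation_image_betaSeq hN (min_le_right _ _))
  have hdisj := h.disjoint_Ico t₀
  have hinj := (betaSeq_strictAnti hanti s).injective
  have hcard : (#F : ℤ) = s - t := by
    have := congrArg (fun F => (#F : ℤ)) hext
    simp only [card_union_of_disjoint hdisj, card_image_of_injective _ hinj, card_range,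
      Int.card_Ico] at this
    omega
  refine ⟨hcard, ?_⟩
  have hsum := congrArg (fun F => ∑ x ∈ F, x) hext
  simp only [sum_union hdisj, sum_image fun i _ j _ hij => hinj hij,
    sum_range_betaSeq hN (show N ≤ K by omega), show s - K = t₀ by omega] at hsum
  rw [← Ico_union_Ico_eq_Ico (min_le_left _ _) (show t ≤ s by omega),
    sum_union (Ico_disjoint_Ico_consecutive _ _ _)] at hsum
  linarith

theorem IsTruncation.card_eq_and_sum_sub {f' : ℕ → ℕ} {F F' : Finset ℤ} (hf : IsPartition f)
    (hf' : IsPartition f') (h : IsTruncation F (betaSet s f) t)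
    (h' : IsTruncation F' (betaSet s f') t) :
    #F = #F' ∧ ∑ x ∈ F, x - ∑ x ∈ F', x = psize f - psize f' := by
  obtain ⟨hc, hs⟩ := h.card_eq_and_sum_eq hf
  obtain ⟨hc', hs'⟩ := h'.card_eq_and_sum_eq hf'
  exact ⟨by omega, by rw [hs, hs']; ring⟩

open Filter in
theorem IsPartition.eventually_isTruncation (hf : IsPartition f) (s : ℤ) :
    ∀ᶠ t in atBot, ∃ F, IsTruncation F (betaSet s f) t := by
  obtain ⟨-, N, hN⟩ := hf
  filter_upwards [eventually_le_atBot (s - N)] with t ht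
  exact ⟨_, isTruncation_image_betaSeq hN ht⟩

end BetaSet

section Slice

variable {ι α β M : Type*}

noncomputable def Equiv.slice (E : ι × α ≃ β) (F : Finset β) (i : ι) : Finset α :=
  F.preimage (fun a => E (i, a)) (E.injective.comp (Prod.mk_right_injective i)).injOn

@[simp]
theorem Equiv.mem_slice (E : ι × α ≃ β) {F : Finset β} {i : ι} {a : α} :
    a ∈ E.slice F i ↔ E (i, a) ∈ F :=
  mem_preimage

theorem Equiv.sum_eq_sum_sum_slice [Fintype ι] [AddCommMonoid M] (E : ι × α ≃ β) (F : Finset β)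
    (w : β → M) : ∑ b ∈ F, w b = ∑ i, ∑ a ∈ E.slice F i, w (E (i, a)) := by
  rw [← sum_finset_product (F.preimage E E.injective.injOn) univ (E.slice F) (by simp)
    (f := fun p => w (E p))]
  exact (sum_equiv E (by simp) (by simp)).symm

theorem Equiv.sum_comp_fst_symm [Fintype ι] [AddCommMonoid M] (E : ι × α ≃ β) (F : Finset β)
    (v : ι → M) : ∑ b ∈ F, v (E.symm b).1 = ∑ i, #(E.slice F i) • v i := by
  simp [E.sum_eq_sum_sum_slice F]

theorem Equiv.sum_comp_snd_symm [Fintype ι] [AddCommMonoid M] (E : ι × α ≃ β) (F : Finset β)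
    (v : α → M) : ∑ b ∈ F, v (E.symm b).2 = ∑ i, ∑ a ∈ E.slice F i, v a := by
  simp [E.sum_eq_sum_sum_slice F]

end Slice

section Abacus

variable {ι : Type*} [Fintype ι] (E : ι × ℤ ≃ ℤ) {F F' : Finset ℤ} {c t : ι → ℤ}
  {g g' : ι → ℕ → ℕ}

theorem sum_comp_fst_symm_eq_of_isTruncation (hg : ∀ i, IsPartition (g i))
    (hg' : ∀ i, IsPartition (g' i)) (h : ∀ i, IsTruncation (E.slice F i) (betaSet (c i) (g i)) (t i))
    (h' : ∀ i, IsTruncation (E.slice F' i) (betaSet (c i) (g' i)) (t i))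
    {M : Type*} [AddCommMonoid M] (v : ι → M) :
    ∑ b ∈ F, v (E.symm b).1 = ∑ b ∈ F', v (E.symm b).1 := by
  simp only [E.sum_comp_fst_symm, ((h _).card_eq_and_sum_sub (hg _) (hg' _) (h' _)).1]

theorem sum_snd_symm_sub_of_isTruncation (hg : ∀ i, IsPartition (g i))
    (hg' : ∀ i, IsPartition (g' i)) (h : ∀ i, IsTruncation (E.slice F i) (betaSet (c i) (g i)) (t i))
    (h' : ∀ i, IsTruncation (E.slice F' i) (betaSet (c i) (g' i)) (t i)) :
    ∑ b ∈ F, (E.symm b).2 - ∑ b ∈ F', (E.symm b).2 = ∑ i, ((psize (g i) : ℤ) - psize (g' i)) := by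
  simp only [E.sum_comp_snd_symm _ fun a => a, ← sum_sub_distrib,
    ((h _).card_eq_and_sum_sub (hg _) (hg' _) (h' _)).2]

end Abacus

section Runner

variable {e : ℕ} [NeZero e]

def runnerEquiv (e : ℕ) [NeZero e] : Fin e × ℤ ≃ ℤ :=
  (Equiv.prodComm _ _).trans (Int.divModEquiv e).symm

@[simp]
theorem runnerEquiv_apply (j : Fin e) (k : ℤ) : runnerEquiv e (j, k) = k * e + j := by
  simp [runnerEquiv]

theorem runnerSet_eq_preimage (j : Fin e) (X : Set ℤ) :
    runnerSet e j X = (fun k => runnerEquiv e (j, k)) ⁻¹' X := by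
  ext k
  simp [runnerSet, add_comm]

theorem runnerEquiv_lt_iff (j : Fin e) (k t : ℤ) :
    runnerEquiv e (j, k) < t ↔ k < (t - 1 - j) / e + 1 := by
  rw [runnerEquiv_apply, Int.lt_add_one_iff, Int.le_ediv_iff_mul_le (by have := NeZero.pos e; omega)]
  omega

theorem eq_runnerEquiv_symm (β : ℤ) :
    β = ((runnerEquiv e).symm β).1 + ((runnerEquiv e).symm β).2 * e := by
  conv_lhs => rw [← (runnerEquiv e).apply_symm_apply β]
  rw [runnerEquiv_apply, add_comm]

variable {m : ℤ} {f f' : ℕ → ℕ} {g g' : Fin e → ℕ → ℕ} {se : Fin e → ℤ} {F F' : Finset ℤ} {t : ℤ}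

theorem QuotientData.isTruncation_slice (hq : QuotientData e m f g se)
    (hF : IsTruncation F (betaSet m f) t) (j : Fin e) :
    IsTruncation ((runnerEquiv e).slice F j) (betaSet (se j) (g j)) ((t - 1 - j) / e + 1) := by
  rw [hq j, runnerSet_eq_preimage]
  exact hF.preimage _ (runnerEquiv_lt_iff j · t)

theorem QuotientData.sum_eq_of_periodic (hq : QuotientData e m f g se)
    (hq' : QuotientData e m f' g' se) (hg : ∀ j, IsPartition (g j))
    (hg' : ∀ j, IsPartition (g' j)) (hF : IsTruncation F (betaSet m f) t)
    (hF' : IsTruncation F' (betaSet m f') t) {M : Type*} [AddCommMonoid M] (w : ℤ → M)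
    (hw : Function.Periodic w e) : ∑ β ∈ F, w β = ∑ β ∈ F', w β := by
  have hw' : ∀ β, w β = w ((runnerEquiv e).symm β).1 := fun β => by
    conv_lhs => rw [eq_runnerEquiv_symm (e := e) β]
    exact hw.int_mul _ _
  rw [sum_congr rfl fun β _ => hw' β, sum_congr rfl fun β _ => hw' β]
  exact sum_comp_fst_symm_eq_of_isTruncation _ hg hg' (hq.isTruncation_slice hF)
    (hq'.isTruncation_slice hF') fun j => w j

theorem QuotientData.sum_sub_eq (hq : QuotientData e m f g se)
    (hq' : QuotientData e m f' g' se) (hg : ∀ j, IsPartition (g j))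
    (hg' : ∀ j, IsPartition (g' j)) (hF : IsTruncation F (betaSet m f) t)
    (hF' : IsTruncation F' (betaSet m f') t) :
    ∑ β ∈ F, β - ∑ β ∈ F', β = e * ∑ j, ((psize (g j) : ℤ) - psize (g' j)) := by
  have hres := sum_comp_fst_symm_eq_of_isTruncation _ hg hg' (hq.isTruncation_slice hF)
    (hq'.isTruncation_slice hF') fun j => ((j : ℕ) : ℤ)
  have hquot := sum_snd_symm_sub_of_isTruncation _ hg hg' (hq.isTruncation_slice hF)
    (hq'.isTruncation_slice hF')
  rw [sum_congr rfl fun β _ => eq_runnerEquiv_symm (e := e) β,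
    sum_congr rfl fun β _ => eq_runnerEquiv_symm (e := e) β]
  simp only [sum_add_distrib, ← sum_mul]
  linear_combination hres + (e : ℤ) * hquot

end Runner

theorem Int.mul_add_lt_mul_iff {a b n P : ℤ} (hb : 0 ≤ b) (hbn : b < n) :
    a * n + b < P * n ↔ a < P := by
  constructor
  · intro h
    by_contra! hPa
    nlinarith
  · intro h
    nlinarith

section Uglov

variable {e l : ℕ} [NeZero e] [NeZero l]

-- `(d, c + e·q) ↦ c + e·d + e·l·q` for `c ∈ {1, …, e}`, inverting Uglov's decomposition.
def uglovEquiv (e l : ℕ) [NeZero e] [NeZero l] : Fin l × ℤ ≃ ℤ :=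
  ((Equiv.refl _).prodCongr ((Equiv.subRight 1).trans (Int.divModEquiv e))).trans <|
    (Equiv.prodAssoc _ _ _).symm.trans <|
    (((Equiv.prodComm _ _).trans (Int.divModEquiv l).symm).prodCongr (Equiv.refl _)).trans <|
    (Int.divModEquiv e).symm.trans (Equiv.addRight 1)

theorem uglovEquiv_apply (d : Fin l) (y : ℤ) :
    uglovEquiv e l (d, y) = ((y - 1) / e * l + d) * e + (y - 1) % e + 1 := by
  have : 0 ≤ (y - 1) % e := Int.emod_nonneg _ (by simp [NeZero.ne e])
  simp [uglovEquiv, Int.natMod, Int.toNat_of_nonneg this]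

theorem uglovEquiv_apply_eq_iff {d : Fin l} {y β : ℤ} :
    uglovEquiv e l (d, y) = β ↔
      (β - 1) / e % l = d ∧ y = (β - 1) % e + 1 + e * ((β - 1) / (e * l)) := by
  have he : (0 : ℤ) < e := by have := NeZero.pos e; omega
  have hl : (0 : ℤ) < l := by have := NeZero.pos l; omega
  rw [uglovEquiv_apply, ← Int.ediv_ediv_of_nonneg he.le]
  set E : ℤ := (e : ℤ)
  set L : ℤ := (l : ℤ)
  set D : ℤ := ((d : ℕ) : ℤ)
  have hD : 0 ≤ D ∧ D < L := ⟨by positivity, by simp [D, L]⟩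
  have hr : 0 ≤ (y - 1) % E ∧ (y - 1) % E < E := ⟨Int.emod_nonneg _ he.ne', Int.emod_lt_of_pos _ he⟩
  have hy := Int.emod_add_mul_ediv (y - 1) E
  constructor
  · intro hβ
    obtain ⟨hQ, hR⟩ : (β - 1) / E = (y - 1) / E * L + D ∧ (β - 1) % E = (y - 1) % E :=
      (Int.ediv_emod_unique he).2 ⟨by rw [← hβ]; ring, hr⟩
    obtain ⟨hq, hd⟩ : ((y - 1) / E * L + D) / L = (y - 1) / E ∧ ((y - 1) / E * L + D) % L = D :=
      (Int.ediv_emod_unique hl).2 ⟨by ring, hD⟩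
    rw [hQ, hq, hd, hR]
    exact ⟨rfl, by linarith⟩
  · rintro ⟨hd, hy'⟩
    have hr' : 0 ≤ (β - 1) % E ∧ (β - 1) % E < E := ⟨Int.emod_nonneg _ he.ne', Int.emod_lt_of_pos _ he⟩
    obtain ⟨hq, hR⟩ : (y - 1) / E = (β - 1) / E / L ∧ (y - 1) % E = (β - 1) % E :=
      (Int.ediv_emod_unique he).2 ⟨by rw [hy']; ring, hr'⟩
    have hQ := Int.emod_add_mul_ediv ((β - 1) / E) L
    have hβ := Int.emod_add_mul_ediv (β - 1) E
    rw [hq, hR]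
    rw [hd] at hQ
    linear_combination hβ + E * hQ

theorem uglovComp_eq_preimage (d : Fin l) (X : Set ℤ) :
    uglovComp e l d X = (fun y => uglovEquiv e l (d, y)) ⁻¹' X := by
  ext y
  constructor
  · rintro ⟨β, hβ, hd, hy⟩
    rwa [Set.mem_preimage, uglovEquiv_apply_eq_iff.2 ⟨hd, hy⟩]
  · intro h
    exact ⟨_, h, uglovEquiv_apply_eq_iff.1 rfl⟩

theorem uglovEquiv_lt_iff (d : Fin l) (y P : ℤ) :
    uglovEquiv e l (d, y) < 1 + e * l * P ↔ y < 1 + e * P := by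
  have he : (0 : ℤ) < e := by have := NeZero.pos e; omega
  have hr : 0 ≤ (y - 1) % e ∧ (y - 1) % e < e := ⟨Int.emod_nonneg _ he.ne', Int.emod_lt_of_pos _ he⟩
  have hd : 0 ≤ ((d : ℕ) : ℤ) ∧ ((d : ℕ) : ℤ) < l := ⟨by positivity, by simp⟩
  have hy := Int.emod_add_mul_ediv (y - 1) e
  calc uglovEquiv e l (d, y) < 1 + e * l * P
      ↔ ((y - 1) / e * l + d) * e + (y - 1) % e < (l * P) * e := by
        rw [uglovEquiv_apply]; constructor <;> intro h <;> linarith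
    _ ↔ (y - 1) / e * l + d < P * l := by rw [Int.mul_add_lt_mul_iff hr.1 hr.2, mul_comm (l : ℤ)]
    _ ↔ (y - 1) / e * e + (y - 1) % e < P * e := by
        rw [Int.mul_add_lt_mul_iff hd.1 hd.2, Int.mul_add_lt_mul_iff hr.1 hr.2]
    _ ↔ y < 1 + e * P := by constructor <;> intro h <;> linarith

theorem eq_uglovEquiv_symm (β : ℤ) :
    β = l * ((uglovEquiv e l).symm β).2 + (1 - l) * ((β - 1) % e + 1) +
      e * ((uglovEquiv e l).symm β).1 := by
  obtain ⟨⟨d, y⟩, rfl⟩ := (uglovEquiv e l).surjective β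
  obtain ⟨hd, hy⟩ := uglovEquiv_apply_eq_iff.1 (rfl : uglovEquiv e l (d, y) = _)
  set β := uglovEquiv e l (d, y)
  rw [Equiv.symm_apply_apply, hy, ← Int.ediv_ediv_of_nonneg (by positivity)]
  have hQ := Int.emod_add_mul_ediv ((β - 1) / e) l
  have hβ := Int.emod_add_mul_ediv (β - 1) e
  rw [hd] at hQ
  linear_combination -hβ - e * hQ

variable {m : ℤ} {f f' : ℕ → ℕ} {L L' : Fin l → ℕ → ℕ} {sl : Fin l → ℤ} {F F' : Finset ℤ} {P : ℤ}

theorem UglovData.isTruncation_slice (hu : UglovData e l m f L sl)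
    (hF : IsTruncation F (betaSet m f) (1 + e * l * P)) (d : Fin l) :
    IsTruncation ((uglovEquiv e l).slice F d) (betaSet (sl d) (L d)) (1 + e * P) := by
  rw [hu d, uglovComp_eq_preimage]
  exact hF.preimage _ (uglovEquiv_lt_iff d · P)

theorem UglovData.sum_sub_eq (hu : UglovData e l m f L sl) (hu' : UglovData e l m f' L' sl)
    (hL : ∀ d, IsPartition (L d)) (hL' : ∀ d, IsPartition (L' d))
    (hF : IsTruncation F (betaSet m f) (1 + e * l * P))
    (hF' : IsTruncation F' (betaSet m f') (1 + e * l * P))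
    (hres : ∑ β ∈ F, ((β - 1) % e + 1) = ∑ β ∈ F', ((β - 1) % e + 1)) :
    ∑ β ∈ F, β - ∑ β ∈ F', β = l * ∑ d, ((psize (L d) : ℤ) - psize (L' d)) := by
  have hcomp := sum_comp_fst_symm_eq_of_isTruncation _ hL hL' (hu.isTruncation_slice hF)
    (hu'.isTruncation_slice hF') fun d => ((d : ℕ) : ℤ)
  have hsize := sum_snd_symm_sub_of_isTruncation _ hL hL' (hu.isTruncation_slice hF)
    (hu'.isTruncation_slice hF')
  have hdecomp : ∀ G : Finset ℤ, ∑ β ∈ G, β = l * ∑ β ∈ G, ((uglovEquiv e l).symm β).2 +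
      (1 - l) * ∑ β ∈ G, ((β - 1) % e + 1) + e * ∑ β ∈ G, (((uglovEquiv e l).symm β).1 : ℤ) :=
    fun G => by
      simp only [mul_sum, ← sum_add_distrib]
      exact sum_congr rfl fun β _ => eq_uglovEquiv_symm β
  rw [hdecomp F, hdecomp F']
  linear_combination (l : ℤ) * hsize + (1 - (l : ℤ)) * hres + (e : ℤ) * hcomp

end Uglov

open Filter in
theorem exists_common_isTruncation {f f' : ℕ → ℕ} (hf : IsPartition f) (hf' : IsPartition f')
    (s : ℤ) {n : ℤ} (hn : 0 < n) :
    ∃ P, (∃ F, IsTruncation F (betaSet s f) (1 + n * P)) ∧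
      ∃ F', IsTruncation F' (betaSet s f') (1 + n * P) := by
  have hcut : Tendsto (fun P => 1 + n * P) atBot atBot :=
    tendsto_atBot_add_const_left _ 1 (by simpa [mul_comm] using tendsto_id.atBot_mul_const' hn)
  exact (hcut.eventually ((hf.eventually_isTruncation s).and (hf'.eventually_isTruncation s))).exists

/-- if two partitions have the same Uglov `l`-multicharge and the
same `e`-core multicharge, and their Uglov `l`-partitions have equal size, then
their `e`-quotients have equal size. -/
theorem same_size_level_rank (e l : ℕ) (he : 2 ≤ e) (hl : 1 ≤ l) (m : ℤ)
    (f f' : ℕ → ℕ) (hf : IsPartition f) (hf' : IsPartition f')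
    (L L' : Fin l → ℕ → ℕ) (sl : Fin l → ℤ)
    (hL : ∀ c, IsPartition (L c)) (hL' : ∀ c, IsPartition (L' c))
    (hu : UglovData e l m f L sl) (hu' : UglovData e l m f' L' sl)
    (g g' : Fin e → ℕ → ℕ) (se : Fin e → ℤ)
    (hg : ∀ j, IsPartition (g j)) (hg' : ∀ j, IsPartition (g' j))
    (hq : QuotientData e m f g se) (hq' : QuotientData e m f' g' se)
    (hsize : ∑ c, psize (L c) = ∑ c, psize (L' c)) :
    ∑ j, psize (g j) = ∑ j, psize (g' j) := by
  have : NeZero e := ⟨by omega⟩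
  have : NeZero l := ⟨by omega⟩
  obtain ⟨P, ⟨F, hF⟩, F', hF'⟩ :=
    exists_common_isTruncation hf hf' m (n := e * l) (by positivity)
  have hquot := hq.sum_sub_eq hq' hg hg' hF hF'
  have hres := hq.sum_eq_of_periodic hq' hg hg' hF hF' (fun β => (β - 1) % e + 1)
    fun β => by simp only [add_sub_right_comm, Int.add_emod_right]
  have hlevel := hu.sum_sub_eq hu' hL hL' hF hF' hres
  have hL0 : ∑ d, ((psize (L d) : ℤ) - psize (L' d)) = 0 := by
    rw [sum_sub_distrib, sub_eq_zero]
    exact_mod_cast hsize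
  have hg0 : ∑ j, ((psize (g j) : ℤ) - psize (g' j)) = 0 := by
    have := hquot.symm.trans hlevel
    rw [hL0, mul_zero] at this
    exact (mul_eq_zero.1 this).resolve_left (by positivity)
  rw [sum_sub_distrib, sub_eq_zero] at hg0
  exact_mod_cast hg0
end

section
/- Fix e ≥ 2, l ≥ 1 and s^l ∈ 𝒜^l_e. If the l-symbol (X₀,…,X_{l-1}) of (λ^l, s^l) satisfies X₀ ⊂ X₁ ⊂ ⋯ ⊂ X_{l-1} ⊂ X₀ + e, and λ^l admits an addable i-node (for some residue i), then λ^l admits no removable i-node. -/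
/-!
Every component of the symbol contains `X_b - e` for every `b` (go up the chain to `X_{l-1}`,
shift into `X₀`, go up again), so subtracting a positive multiple of `e` never leaves the
symbol. An addable `i`-node gives `β ∈ X_c`, `β + 1 ∉ X_c`, a removable one `γ ∈ X_{c'}`,
`γ - 1 ∉ X_{c'}`, with `γ ≡ β + 1 (mod e)`. If `γ > β + 1`, shifting `γ` down lands on
`β + 1 ∈ X_c`; if `γ < β + 1`, shifting `β` down lands on `γ - 1 ∈ X_{c'}`; if `γ = β + 1`,
the inclusion between `X_c` and `X_{c'}` gives the contradiction.
-/

theorem sub_mul_mem_of_forall_sub_mem {ι : Type*} {X : ι → Set ℤ} {e : ℤ}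
    (hsub : ∀ a b, ∀ x ∈ X b, x - e ∈ X a) {k : ℤ} (hk : 0 < k) (a b : ι) {x : ℤ}
    (hx : x ∈ X b) : x - k * e ∈ X a := by
  induction k, hk using Int.leInduction generalizing a with
  | base => simpa using hsub a b x hx
  | succ k hk ih =>
    simpa only [sub_sub, add_one_mul] using hsub a a _ (ih a)

theorem false_of_addable_of_removable {ι : Type*} [LinearOrder ι] {X : ι → Set ℤ} {e : ℤ}
    (hmono : Monotone X) (hsub : ∀ a b, ∀ x ∈ X b, x - e ∈ X a) {c c' : ι} {β γ : ℤ}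
    (hβ : β ∈ X c) (hβ1 : β + 1 ∉ X c) (hγ : γ ∈ X c') (hγ1 : γ - 1 ∉ X c')
    (hmod : γ ≡ β + 1 [ZMOD e]) : False := by
  obtain ⟨k, hk⟩ := hmod.symm.dvd
  rcases lt_trichotomy k 0 with hneg | rfl | hpos
  · refine hγ1 ?_
    convert sub_mul_mem_of_forall_sub_mem hsub (neg_pos.mpr hneg) c' c hβ using 1
    linarith
  · obtain rfl : γ = β + 1 := by linarith
    rcases le_total c c' with hle | hle
    · exact hγ1 (by simpa using hmono hle hβ)
    · exact hβ1 (hmono hle hγ)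
  · refine hβ1 ?_
    convert sub_mul_mem_of_forall_sub_mem hsub hpos c c' hγ using 1
    linarith

theorem IsECorePair.sub_mem {e l : ℕ} [NeZero l] {L : Fin l → ℕ → ℕ} {s : Fin l → ℤ}
    (hcore : IsECorePair e l L s) (a b : Fin l) :
    ∀ x ∈ betaSet (s b) (L b), x - e ∈ betaSet (s a) (L a) := by
  obtain ⟨hchain, hshift⟩ := hcore
  intro x hx
  have hlast : b ≤ finLast' l := Fin.le_def.mpr (Nat.le_sub_one_of_lt b.isLt)
  exact hchain 0 a (Fin.zero_le a) (hshift (hchain b _ hlast hx))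

theorem no_removable_of_addable_general (e l : ℕ) [NeZero l]
    (s : Fin l → ℤ)
    (L : Fin l → ℕ → ℕ)
    (hcore : IsECorePair e l L s) (i : Fin e)
    (hadd : HasAddableNode e l L s (i : ℤ)) :
    ¬ HasRemovableNode e l L s (i : ℤ) := by
  rintro ⟨c', γ, hγ, hγ1, hγmod⟩
  obtain ⟨c, β, hβ, hβ1, hβmod⟩ := hadd
  exact false_of_addable_of_removable hcore.1 hcore.sub_mem hβ hβ1 hγ hγ1
    (hγmod.trans hβmod.symm)

/-- if the `l`-symbol of `(λ^l, s^l)` satisfies the core chain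
condition and `λ^l` admits an addable `i`-node, then it admits no removable
`i`-node. -/
theorem no_removable_of_addable (e l : ℕ) (he : 2 ≤ e) [NeZero l]
    (s : Fin l → ℤ) (hs : ∀ i j : Fin l, i < j → 0 ≤ s j - s i ∧ s j - s i < e)
    (L : Fin l → ℕ → ℕ) (hL : ∀ c, IsPartition (L c))
    (hcore : IsECorePair e l L s) (i : Fin e)
    (hadd : HasAddableNode e l L s (i : ℤ)) :
    ¬ HasRemovableNode e l L s (i : ℤ) :=
  no_removable_of_addable_general e l s L hcore i hadd
end

section
/- Fix e ≥ 2, l ≥ 1, and consider the action of the affine symmetric group generators σ₀,…,σ_{e-1} on ℤ^e[m], where σ_i for i ≥ 1 swaps coordinates i−1 and i, and σ₀·s = (s_{e-1}+l, s₁,…,s_{e-2}, s₀−l). Then for any s_e ∈ ℤ^e[m] there exists a product w of the generators σ₀,…,σ_{e-1} such that w·s_e = s satisfies s₀ ≥ s₁ ≥ ⋯ ≥ s_{e-1} and s₀ − s_{e-1} ≤ l; that is, every orbit of the action on ℤ^e[m] contains such an element. -/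
section OrbitAux
open Finset

set_option linter.unusedSectionVars false

variable {e : ℕ} [NeZero e]

def uglovPhi {e : ℕ} (s : Fin e → ℤ) : ℤ := ∑ j, (j.val : ℤ) * s j
def uglovSQ {e : ℕ} (s : Fin e → ℤ) : ℤ := ∑ j, (s j) ^ 2

lemma uglov_sub_one_val (i : Fin e) (hi : i ≠ 0) : (i - 1).val = i.val - 1 := by
  rcases i with ⟨v, hv⟩
  have h0 : v ≠ 0 := by simpa [Fin.ext_iff] using hi
  have he2 : 2 ≤ e := by omega
  rw [Fin.sub_def]
  simp only [Fin.val_one']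
  rw [Nat.mod_eq_of_lt he2]
  show (e - 1 + v) % e = v - 1
  have h : e - 1 + v = (v - 1) + e := by omega
  rw [h, Nat.add_mod_right, Nat.mod_eq_of_lt (by omega)]

lemma uglov_pair_split (f : Fin e → ℤ) {a b : Fin e} (hab : a ≠ b) :
    ∑ j, f j = f a + f b + ∑ j ∈ univ \ ({a, b} : Finset (Fin e)), f j := by
  rw [← Finset.sum_sdiff (Finset.subset_univ {a, b}), Finset.sum_pair hab]
  ring

lemma uglov_antitone_of_adj (s : Fin e → ℤ)
    (h : ∀ k (hk : k + 1 < e), s ⟨k + 1, hk⟩ ≤ s ⟨k, Nat.lt_of_succ_lt hk⟩) :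
    ∀ i j : Fin e, i ≤ j → s j ≤ s i := by
  intro i j hij
  obtain ⟨d, hd⟩ : ∃ d, j.val = i.val + d :=
    ⟨j.val - i.val, by have := Fin.le_def.mp hij; omega⟩
  clear hij
  induction d generalizing j with
  | zero => have hji : j = i := Fin.ext (show j.val = i.val by omega); simp [hji]
  | succ d ih =>
    have hlt : i.val + d < e := by have := j.isLt; omega
    have hk : (i.val + d) + 1 < e := by have := j.isLt; omega
    have h1 : s j ≤ s ⟨i.val + d, hlt⟩ := by
      have hj : j = ⟨i.val + d + 1, hk⟩ := Fin.ext (show j.val = i.val + d + 1 by omega)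
      rw [hj]; exact h (i.val + d) hk
    exact le_trans h1 (ih ⟨i.val + d, hlt⟩ rfl)

lemma uglov_phi_nonneg (s : Fin e → ℤ) : 0 ≤ uglovPhi s + e * uglovSQ s + (e : ℤ) ^ 2 := by
  have hB : ∑ j : Fin e, (e : ℤ) * ((s j) ^ 2 + 1) = e * uglovSQ s + (e : ℤ) ^ 2 := by
    simp only [mul_add, Finset.sum_add_distrib, mul_one, Finset.sum_const, Finset.card_univ,
      Fintype.card_fin, ← Finset.mul_sum, uglovSQ, nsmul_eq_mul]
    ring
  have key : uglovPhi s + e * uglovSQ s + (e : ℤ) ^ 2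
      = ∑ j : Fin e, ((j.val : ℤ) * s j + (e : ℤ) * ((s j) ^ 2 + 1)) := by
    rw [Finset.sum_add_distrib, hB, uglovPhi]; ring
  rw [key]
  apply Finset.sum_nonneg
  intro j _
  have hj : (j.val : ℤ) < e := by exact_mod_cast j.isLt
  have hj0 : 0 ≤ (j.val : ℤ) := Int.natCast_nonneg _
  have h1 : 0 ≤ (s j) ^ 2 + s j + 1 := by nlinarith [sq_nonneg (2 * s j + 1)]
  have h2 : 0 ≤ (s j) ^ 2 + 1 := by positivity
  nlinarith [mul_nonneg hj0 h1, mul_nonneg (by linarith : (0:ℤ) ≤ (e:ℤ) - j.val) h2]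

lemma uglov_sum_swap (s : Fin e → ℤ) (a b : Fin e) (F : ℤ → ℤ) :
    ∑ j, F (s (Equiv.swap a b j)) = ∑ j, F (s j) :=
  Equiv.sum_comp (Equiv.swap a b) (fun j => F (s j))

lemma uglov_phi_swap (s : Fin e → ℤ) {a b : Fin e} (hab : a ≠ b) :
    uglovPhi (fun j => s (Equiv.swap a b j))
      = uglovPhi s + ((a.val : ℤ) - b.val) * (s b - s a) := by
  unfold uglovPhi
  rw [uglov_pair_split (fun j => (j.val : ℤ) * s (Equiv.swap a b j)) hab,
      uglov_pair_split (fun j => (j.val : ℤ) * s j) hab]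
  have hoff : ∀ j ∈ univ \ ({a, b} : Finset (Fin e)),
      (j.val : ℤ) * s (Equiv.swap a b j) = (j.val : ℤ) * s j := by
    intro j hj
    simp only [Finset.mem_sdiff, Finset.mem_insert, Finset.mem_singleton] at hj
    rw [Equiv.swap_apply_of_ne_of_ne (by tauto) (by tauto)]
  rw [Finset.sum_congr rfl hoff]
  simp only [Equiv.swap_apply_left, Equiv.swap_apply_right]
  ring

/-- Sorting lemma: using only generators `σ_i`, `i ≠ 0`, reach a weakly
decreasing vector, preserving the sum and the sum of squares. -/
lemma uglov_sortAux (l : ℕ) : ∀ (n : ℕ) (s : Fin e → ℤ),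
    (uglovPhi s + e * uglovSQ s + (e : ℤ) ^ 2).toNat ≤ n →
    ∃ L : List (Fin e),
      (∀ i j : Fin e, i ≤ j →
        (L.foldr (fun i' u => sigmaAct e l i' u) s) j ≤
          (L.foldr (fun i' u => sigmaAct e l i' u) s) i) ∧
      (∑ j, (L.foldr (fun i' u => sigmaAct e l i' u) s) j = ∑ j, s j) ∧
      uglovSQ (L.foldr (fun i' u => sigmaAct e l i' u) s) = uglovSQ s := by
  intro n
  induction n using Nat.strong_induction_on with
  | _ n ih =>
    intro s hn
    by_cases hsort : ∀ k (hk : k + 1 < e), s ⟨k + 1, hk⟩ ≤ s ⟨k, Nat.lt_of_succ_lt hk⟩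
    · exact ⟨[], uglov_antitone_of_adj s hsort, rfl, rfl⟩
    · push_neg at hsort
      obtain ⟨k, hk, hkv⟩ := hsort
      set i : Fin e := ⟨k + 1, hk⟩ with hidef
      have hi0 : i ≠ 0 := by
        simp [hidef, Fin.ext_iff, Fin.val_zero]
      have hival : (i - 1).val = k := by rw [uglov_sub_one_val i hi0]; simp [hidef]
      have hab : i - 1 ≠ i := by
        intro h
        have := congrArg Fin.val h
        rw [hival] at this
        simp [hidef] at this
      set s' : Fin e → ℤ := sigmaAct e l i s with hs'def
      have hs'eq : s' = fun j => s (Equiv.swap (i - 1) i j) := by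
        simp [hs'def, sigmaAct, hi0]
      have hsum : ∑ j, s' j = ∑ j, s j := by
        rw [hs'eq]; exact uglov_sum_swap s (i - 1) i id
      have hsq : uglovSQ s' = uglovSQ s := by
        rw [hs'eq]; exact uglov_sum_swap s (i - 1) i (fun x => x ^ 2)
      have hphi : uglovPhi s' < uglovPhi s := by
        rw [hs'eq, uglov_phi_swap s hab]
        have h1 : ((i - 1).val : ℤ) - i.val = -1 := by
          rw [hival]; simp [hidef]
        have h2 : s (i - 1) < s i := by
          have heq : (i - 1) = (⟨k, Nat.lt_of_succ_lt hk⟩ : Fin e) := Fin.ext hival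
          rw [heq]; exact hkv
        rw [h1]; linarith
      have hb := uglov_phi_nonneg s'
      have hmeas : (uglovPhi s' + e * uglovSQ s' + (e : ℤ) ^ 2).toNat
          < (uglovPhi s + e * uglovSQ s + (e : ℤ) ^ 2).toNat := by
        rw [hsq] at hb ⊢
        omega
      obtain ⟨L', hL'1, hL'2, hL'3⟩ := ih _ (by omega) s' le_rfl
      refine ⟨L' ++ [i], ?_, ?_, ?_⟩
      · intro a b hab'
        rw [List.foldr_append]
        exact hL'1 a b hab'
      · rw [List.foldr_append]
        simpa using hL'2.trans hsum
      · rw [List.foldr_append]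
        simpa using hL'3.trans hsq

lemma uglov_zero_ne_last (he : 2 ≤ e) : (0 : Fin e) ≠ finLast' e := by
  intro h
  have := congrArg Fin.val h
  simp [finLast', Fin.val_zero] at this
  omega

/-- Main induction. -/
lemma uglov_mainAux (l : ℕ) (he : 2 ≤ e) (hl : 1 ≤ l) (m : ℤ) :
    ∀ (n : ℕ) (s : Fin e → ℤ), ∑ j, s j = m →
    ((e : ℤ) * uglovSQ s - m ^ 2).toNat ≤ n →
    ∃ L : List (Fin e),
      (∀ i j : Fin e, i ≤ j →
        (L.foldr (fun i' u => sigmaAct e l i' u) s) j ≤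
          (L.foldr (fun i' u => sigmaAct e l i' u) s) i) ∧
      (L.foldr (fun i' u => sigmaAct e l i' u) s) 0 -
        (L.foldr (fun i' u => sigmaAct e l i' u) s) (finLast' e) ≤ l := by
  intro n
  induction n using Nat.strong_induction_on with
  | _ n ih =>
    intro s hsum hn
    obtain ⟨L₁, ht1, ht2, ht3⟩ :=
      uglov_sortAux (e := e) l (uglovPhi s + e * uglovSQ s + (e : ℤ) ^ 2).toNat s le_rfl
    set t : Fin e → ℤ := L₁.foldr (fun i' u => sigmaAct e l i' u) s with htdef
    by_cases hgap : t 0 - t (finLast' e) ≤ l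
    · exact ⟨L₁, ht1, hgap⟩
    · push_neg at hgap
      have h0l : (0 : Fin e) ≠ finLast' e := uglov_zero_ne_last he
      set u : Fin e → ℤ := sigmaAct e l 0 t with hudef
      have hu0 : u 0 = t (finLast' e) + l := by simp [hudef, sigmaAct]
      have hul : u (finLast' e) = t 0 - l := by
        simp [hudef, sigmaAct, h0l.symm]
      have huoff : ∀ j ∈ univ \ ({(0 : Fin e), finLast' e} : Finset (Fin e)), u j = t j := by
        intro j hj
        simp only [Finset.mem_sdiff, Finset.mem_univ, Finset.mem_insert,
          Finset.mem_singleton, true_and] at hj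
        push_neg at hj
        simp [hudef, sigmaAct, hj.1, hj.2]
      have htsum : ∑ j, t j = m := ht2.trans hsum
      have husum : ∑ j, u j = m := by
        rw [uglov_pair_split u h0l, Finset.sum_congr rfl huoff, hu0, hul]
        rw [uglov_pair_split t h0l] at htsum
        linarith
      have husq : uglovSQ u = uglovSQ t + 2 * l * (t (finLast' e) - t 0 + l) := by
        unfold uglovSQ
        rw [uglov_pair_split (fun j => u j ^ 2) h0l, uglov_pair_split (fun j => t j ^ 2) h0l,
          Finset.sum_congr rfl (fun j hj => by rw [huoff j hj])]
        rw [hu0, hul]; ring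
      have hl1 : (1 : ℤ) ≤ (l : ℤ) := by exact_mod_cast hl
      have hsqlt : uglovSQ u < uglovSQ s := by
        rw [husq, ht3]
        nlinarith
      have hcs : m ^ 2 ≤ (e : ℤ) * uglovSQ u := by
        have h := sq_sum_le_card_mul_sum_sq (s := (univ : Finset (Fin e))) (f := u)
        simp only [Finset.card_univ, Fintype.card_fin] at h
        rw [husum] at h
        exact_mod_cast h
      have hepos : (0 : ℤ) < e := by exact_mod_cast Nat.pos_of_ne_zero (NeZero.ne e)
      have hmul : (e : ℤ) * uglovSQ u < (e : ℤ) * uglovSQ s :=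
        mul_lt_mul_of_pos_left hsqlt hepos
      have hmeas : ((e : ℤ) * uglovSQ u - m ^ 2).toNat < n := by omega
      obtain ⟨L₂, hL1, hL2⟩ := ih _ hmeas u husum le_rfl
      have hfold : List.foldr (fun i' u => sigmaAct e l i' u) s ((0 : Fin e) :: L₁) = u := by
        simp only [List.foldr_cons]; rfl
      refine ⟨L₂ ++ ((0 : Fin e) :: L₁), ?_, ?_⟩
      · intro a b hab
        rw [List.foldr_append, hfold]
        exact hL1 a b hab
      · rw [List.foldr_append, hfold]
        exact hL2

end OrbitAux

/-- every orbit of the generators `σ₀, …, σ_{e-1}` on `ℤ^e[m]`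
contains a weakly decreasing element `s` with `s₀ − s_{e-1} ≤ l`. -/
theorem orbit_contains_dominant (e l : ℕ) [NeZero e] (he : 2 ≤ e) (hl : 1 ≤ l)
    (m : ℤ) (s : Fin e → ℤ) (hs : ∑ j, s j = m) :
    ∃ L : List (Fin e),
      (∀ i j : Fin e, i ≤ j →
        (L.foldr (fun i' u => sigmaAct e l i' u) s) j ≤
          (L.foldr (fun i' u => sigmaAct e l i' u) s) i) ∧
      (L.foldr (fun i' u => sigmaAct e l i' u) s) 0 -
        (L.foldr (fun i' u => sigmaAct e l i' u) s) (finLast' e) ≤ l :=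
  uglov_mainAux l he hl m ((e : ℤ) * uglovSQ s - m ^ 2).toNat s hs le_rfl
end
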